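/- arXiv:2203.10011 — 4 statements merged into one kernel-verified Lean document; each statement's English description precedes it below -/
import Mathlib

section
/- Let $\mathcal{I}$ be a nonempty countable index set, $0 < p_0 \le p_1 \le \infty$, and $a = (a_i)_{i \in \mathcal{I}} \in \ell_{p_0}(\mathcal{I})$. Then for every finite subset $\Lambda \subseteq \mathcal{I}$ such that $|a_\lambda| \ge |a_i|$ for all $\lambda \in \Lambda$ and $i \in \mathcal{I} \setminus \Lambda$, one has $\left( \sum_{i \in \mathcal{I} \setminus \Lambda} |a_i|^{p_1} \right)^{1/p_1} \le (|\Lambda| + 1)^{-(1/p_0 - 1/p_1)} \left( \sum_{i \in \mathcal{I}} |a_i|^{p_0} \right)^{1/p_0}$ (with the usual modifications if $p_0$ or $p_1$ equal infinity). -/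
/-!
An entry `a i` with `i ∉ Λ` is dominated by each of the `|Λ| + 1` entries indexed by
`Λ ∪ {i}`, so `(|Λ| + 1) |a i|^p₀ ≤ ‖a‖_p₀^p₀`: the truncated sequence `b` satisfies
`‖b‖_∞ ≤ (|Λ| + 1)^(-1/p₀) ‖a‖_p₀`. The interpolation inequality
`‖b‖_p₁ ≤ ‖b‖_∞^(1 - p₀/p₁) ‖b‖_p₀^(p₀/p₁)` together with `‖b‖_p₀ ≤ ‖a‖_p₀` gives the claim.
-/

open MeasureTheory ENNReal

section Interpolation

variable {α ε : Type*} [MeasurableSpace α] [TopologicalSpace ε] [ContinuousENorm ε]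
  {μ : Measure α} {f : α → ε}

theorem lintegral_rpow_enorm_le_eLpNormEssSup_rpow_mul {p q : ℝ} (hp : 0 ≤ p) (hpq : p ≤ q)
    (hf : AEStronglyMeasurable f μ) :
    ∫⁻ x, ‖f x‖ₑ ^ q ∂μ ≤ eLpNormEssSup f μ ^ (q - p) * ∫⁻ x, ‖f x‖ₑ ^ p ∂μ :=
  calc ∫⁻ x, ‖f x‖ₑ ^ q ∂μ = ∫⁻ x, ‖f x‖ₑ ^ (q - p) * ‖f x‖ₑ ^ p ∂μ := by
        simp_rw [← ENNReal.rpow_add_of_nonneg _ _ (sub_nonneg.2 hpq) hp, sub_add_cancel]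
    _ ≤ ∫⁻ x, eLpNormEssSup f μ ^ (q - p) * ‖f x‖ₑ ^ p ∂μ := by
        refine lintegral_mono_ae ?_
        filter_upwards [ae_le_eLpNormEssSup (f := f)] with x hx
        gcongr
    _ = eLpNormEssSup f μ ^ (q - p) * ∫⁻ x, ‖f x‖ₑ ^ p ∂μ :=
        lintegral_const_mul'' _ (hf.enorm.pow_const p)

theorem eLpNorm'_le_eLpNormEssSup_rpow_mul_eLpNorm'_rpow {p q : ℝ} (hp : 0 < p) (hpq : p ≤ q)
    (hf : AEStronglyMeasurable f μ) :
    eLpNorm' f q μ ≤ eLpNormEssSup f μ ^ (1 - p / q) * eLpNorm' f p μ ^ (p / q) := by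
  have hq : 0 < q := hp.trans_le hpq
  calc eLpNorm' f q μ
      ≤ (eLpNormEssSup f μ ^ (q - p) * ∫⁻ x, ‖f x‖ₑ ^ p ∂μ) ^ (1 / q) := by
        rw [eLpNorm']
        gcongr
        exact lintegral_rpow_enorm_le_eLpNormEssSup_rpow_mul hp.le hpq hf
    _ = eLpNormEssSup f μ ^ (1 - p / q) * eLpNorm' f p μ ^ (p / q) := by
        rw [eLpNorm', ENNReal.mul_rpow_of_nonneg _ _ (by positivity), ← ENNReal.rpow_mul,
          ← ENNReal.rpow_mul]
        congr 2 <;> field_simp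

theorem eLpNorm_le_eLpNormEssSup_rpow_mul_eLpNorm_rpow {p q : ℝ≥0∞} (hp : p ≠ 0) (hpq : p ≤ q)
    (hf : AEStronglyMeasurable f μ) :
    eLpNorm f q μ ≤
      eLpNormEssSup f μ ^ (1 - p.toReal / q.toReal) * eLpNorm f p μ ^ (p.toReal / q.toReal) := by
  rcases eq_or_ne q ∞ with rfl | hq
  · simp
  have hp' : p ≠ ∞ := ne_top_of_le_ne_top hq hpq
  rw [eLpNorm_eq_eLpNorm' hp hp', eLpNorm_eq_eLpNorm' (pos_of_ne_zero hp |>.trans_le hpq).ne' hq]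
  exact eLpNorm'_le_eLpNormEssSup_rpow_mul_eLpNorm'_rpow (toReal_pos hp hp')
    (toReal_mono hq hpq) hf

end Interpolation

section Exponents

/- Since `∞.toReal = 0`, the real exponents below take the conventional values when `p = ∞` or
`q = ∞`. -/

variable {p q : ℝ≥0∞}

theorem toReal_div_toReal_le_one (hpq : p ≤ q) : p.toReal / q.toReal ≤ 1 := by
  rcases eq_or_ne q ∞ with rfl | hq
  · simp
  · exact div_le_one_of_le₀ (toReal_mono hq hpq) toReal_nonneg

theorem one_div_toReal_mul_one_sub_toReal_div (hp : p ≠ 0) (hpq : p ≤ q) :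
    1 / p.toReal * (1 - p.toReal / q.toReal) = 1 / p.toReal - 1 / q.toReal := by
  rcases eq_or_ne p ∞ with rfl | hp'
  · simp [top_le_iff.1 hpq]
  · have := (toReal_pos hp hp').ne'
    field_simp

theorem ofReal_natCast_add_one_rpow (n : ℕ) (e : ℝ) :
    ENNReal.ofReal (((n : ℝ) + 1) ^ e) = ((n : ℝ≥0∞) + 1) ^ e := by
  rw [← ENNReal.ofReal_rpow_of_pos (by positivity), ENNReal.ofReal_add (by positivity) zero_le_one,
    ENNReal.ofReal_natCast, ENNReal.ofReal_one]

end Exponents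

section LargestEntries

variable {I : Type*} {Λ : Finset I} {i : I}

theorem card_add_one_mul_le_tsum {g : I → ℝ≥0∞} (hi : i ∉ Λ) (hΛ : ∀ l ∈ Λ, g i ≤ g l) :
    (Λ.card + 1) * g i ≤ ∑' j, g j :=
  calc (Λ.card + 1) * g i = ∑ _l ∈ Λ, g i + g i := by simp [add_mul]
    _ ≤ ∑ l ∈ Λ, g l + g i := by gcongr with l hl; exact hΛ l hl
    _ = ∑ j ∈ Λ.cons i hi, g j := by rw [Finset.sum_cons, add_comm]
    _ ≤ ∑' j, g j := ENNReal.sum_le_tsum _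

variable [MeasurableSpace I] [MeasurableSingletonClass I] {p : ℝ≥0∞}

theorem enorm_le_rpow_mul_eLpNorm_count {ε : Type*} [ENorm ε] {a : I → ε} (hp : p ≠ 0)
    (hi : i ∉ Λ) (hΛ : ∀ l ∈ Λ, ‖a i‖ₑ ≤ ‖a l‖ₑ) :
    ‖a i‖ₑ ≤ ((Λ.card : ℝ≥0∞) + 1) ^ (-(1 / p.toReal)) * eLpNorm a p Measure.count := by
  rcases eq_or_ne p ∞ with rfl | hp'
  · simpa using le_iSup (fun j => ‖a j‖ₑ) i
  have hq : 0 < p.toReal := toReal_pos hp hp'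
  have hN : ((Λ.card : ℝ≥0∞) + 1) ^ (1 / p.toReal) ≠ 0 := by positivity
  have hN' : ((Λ.card : ℝ≥0∞) + 1) ^ (1 / p.toReal) ≠ ∞ := by simp
  rw [ENNReal.rpow_neg, ← ENNReal.mul_le_iff_le_inv hN hN',
    eLpNorm_eq_lintegral_rpow_enorm_toReal hp hp', lintegral_count]
  calc ((Λ.card : ℝ≥0∞) + 1) ^ (1 / p.toReal) * ‖a i‖ₑ
      = (((Λ.card : ℝ≥0∞) + 1) * ‖a i‖ₑ ^ p.toReal) ^ (1 / p.toReal) := by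
        rw [ENNReal.mul_rpow_of_nonneg _ _ (by positivity), ← ENNReal.rpow_mul,
          mul_one_div_cancel hq.ne', ENNReal.rpow_one]
    _ ≤ (∑' j, ‖a j‖ₑ ^ p.toReal) ^ (1 / p.toReal) := by
        gcongr
        exact card_add_one_mul_le_tsum hi fun l hl => by gcongr; exact hΛ l hl

theorem eLpNormEssSup_count_ite_le {E : Type*} [NormedAddCommGroup E] [DecidableEq I] {a : I → E}
    (hp : p ≠ 0) (hΛ : ∀ l ∈ Λ, ∀ i, i ∉ Λ → ‖a i‖ ≤ ‖a l‖) :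
    eLpNormEssSup (fun i => if i ∈ Λ then 0 else a i) Measure.count ≤
      ((Λ.card : ℝ≥0∞) + 1) ^ (-(1 / p.toReal)) * eLpNorm a p Measure.count := by
  rw [eLpNormEssSup_count]
  refine iSup_le fun i => ?_
  by_cases hi : i ∈ Λ
  · simp [hi]
  · simpa [hi] using enorm_le_rpow_mul_eLpNorm_count hp hi
      fun l hl => enorm_le_iff_norm_le.2 (hΛ l hl i hi)

end LargestEntries

theorem stechkin_inequality_general {I : Type*} [Countable I] [DecidableEq I]
    [MeasurableSpace I] [MeasurableSingletonClass I]
    (p₀ p₁ : ℝ≥0∞) (hp₀ : 0 < p₀) (hp : p₀ ≤ p₁)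
    (a : I → ℂ)
    (Λ : Finset I)
    (hΛ : ∀ l ∈ Λ, ∀ i, i ∉ Λ → ‖a i‖ ≤ ‖a l‖) :
    eLpNorm (fun i => if i ∈ Λ then 0 else a i) p₁ Measure.count ≤
      ENNReal.ofReal (((Λ.card : ℝ) + 1) ^ (-(1 / p₀.toReal - 1 / p₁.toReal))) *
        eLpNorm a p₀ Measure.count := by
  set b : I → ℂ := fun i => if i ∈ Λ then 0 else a i
  set r := p₀.toReal / p₁.toReal
  have hr : 0 ≤ 1 - r := sub_nonneg.2 (toReal_div_toReal_le_one hp)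
  have hb_le_a : eLpNorm b p₀ .count ≤ eLpNorm a p₀ .count :=
    eLpNorm_mono_enorm fun i => by by_cases hi : i ∈ Λ <;> simp [b, hi]
  rw [ofReal_natCast_add_one_rpow, ← one_div_toReal_mul_one_sub_toReal_div hp₀.ne' hp, ← neg_mul,
    ENNReal.rpow_mul]
  calc eLpNorm b p₁ .count
      ≤ eLpNormEssSup b .count ^ (1 - r) * eLpNorm b p₀ .count ^ r :=
        eLpNorm_le_eLpNormEssSup_rpow_mul_eLpNorm_rpow hp₀.ne' hp
          Measurable.of_discrete.aestronglyMeasurable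
    _ ≤ ((Λ.card + 1) ^ (-(1 / p₀.toReal)) * eLpNorm a p₀ .count) ^ (1 - r) *
          eLpNorm a p₀ .count ^ r := by
        gcongr
        exact eLpNormEssSup_count_ite_le hp₀.ne' hΛ
    _ = ((Λ.card + 1) ^ (-(1 / p₀.toReal))) ^ (1 - r) * eLpNorm a p₀ .count := by
        rw [ENNReal.mul_rpow_of_nonneg _ _ hr, mul_assoc,
          ← ENNReal.rpow_add_of_nonneg _ _ hr (by positivity), sub_add_cancel, ENNReal.rpow_one]

/-- Stechkin's inequality: approximation of an `ℓ_{p₀}` sequence by its largest entries.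
`eLpNorm · p Measure.count` is the `ℓ_p` (quasi-)norm, with the usual sup-modification
for `p = ∞`. -/
theorem stechkin_inequality {I : Type*} [Countable I] [Nonempty I] [DecidableEq I]
    [MeasurableSpace I] [MeasurableSingletonClass I]
    (p₀ p₁ : ℝ≥0∞) (hp₀ : 0 < p₀) (hp : p₀ ≤ p₁)
    (a : I → ℂ) (ha : eLpNorm a p₀ Measure.count < ⊤)
    (Λ : Finset I)
    (hΛ : ∀ l ∈ Λ, ∀ i, i ∉ Λ → ‖a i‖ ≤ ‖a l‖) :
    eLpNorm (fun i => if i ∈ Λ then 0 else a i) p₁ Measure.count ≤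
      ENNReal.ofReal (((Λ.card : ℝ) + 1) ^ (-(1 / p₀.toReal - 1 / p₁.toReal))) *
        eLpNorm a p₀ Measure.count :=
  stechkin_inequality_general p₀ p₁ hp₀ hp a Λ hΛ
end

section
/- Let $d \in \mathbb{N}$, $\alpha > \beta > 0$, and $\delta > 0$. Define $\Delta_\mu := \{ j \in \mathbb{N}_0^d : \alpha |j|_1 - \beta |j|_\infty \le \mu \}$ for $\mu \in \mathbb{N}_0$, where $|j|_1 = j_1 + \cdots + j_d$ and $|j|_\infty = \max_i j_i$. Then there exist constants $c, C > 0$ (depending only on $d, \alpha, \beta, \delta$) such that for all $\mu \ge \alpha - \beta$: $c\, 2^{\delta \mu/(\alpha - \beta)} \le \sum_{j \in \Delta_\mu} 2^{\delta |j|_1} \le C\, 2^{\delta \mu/(\alpha - \beta)}$. -/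
/-!
The lower bound comes from the single index `j = m • eᵢ` with `m = ⌊μ / (α - β)⌋`.
For the upper bound, sort `j ∈ Δ_μ` by a coordinate `i` at which `|j|∞ = j i` is attained. Writing
`m = j i` and `s` for the sum of the other coordinates, the constraint becomes
`m ≤ (μ - α s) / (α - β)`, so the sum over `m` is a geometric sum dominated by its largest term
`2^{δμ/(α-β)} · 2^{-δβ s/(α-β)}`. Since `β > 0`, the factor `2^{-δβ s/(α-β)}` makes the remaining
sum over the other coordinates a product of convergent geometric series.
-/

open scoped ENNReal
open Finset

lemma Finset.univ_sup_pi_single {ι : Type*} [Fintype ι] [DecidableEq ι] (i : ι) (m : ℕ) :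
    univ.sup (Pi.single i m : ι → ℕ) = m := by
  refine le_antisymm (Finset.sup_le fun l _ => ?_) (le_sup_of_le (mem_univ i) (by simp))
  rcases eq_or_ne l i with rfl | h <;> simp [*]

theorem ENNReal.tsum_pi_prod {ι κ : Type*} [Fintype ι] (f : ι → κ → ℝ≥0∞) :
    ∑' k : ι → κ, ∏ i, f i (k i) = ∏ i, ∑' n, f i n := by
  revert f
  refine Fintype.induction_empty_option (P := fun ι _ => ∀ f : ι → κ → ℝ≥0∞,
    ∑' k : ι → κ, ∏ i, f i (k i) = ∏ i, ∑' n, f i n) ?_ ?_ ?_ ι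
  · intro α β _ e ih f
    let := Fintype.ofEquiv β e.symm
    rw [← (e.arrowCongr (Equiv.refl κ)).tsum_eq, ← e.prod_comp, ← ih]
    refine tsum_congr fun k => ?_
    rw [← e.prod_comp]
    simp
  · simp
  · intro α _ ih f
    rw [← (Equiv.piOptionEquivProd (β := fun _ => κ)).symm.tsum_eq, Fintype.prod_option, ← ih]
    simp [ENNReal.tsum_prod', ENNReal.tsum_mul_left, ENNReal.tsum_mul_right, Fintype.prod_option]

theorem ENNReal.tsum_pi_prod_pow {ι : Type*} [Fintype ι] (x : ℝ≥0∞) :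
    ∑' k : ι → ℕ, ∏ i, x ^ k i = (1 - x)⁻¹ ^ Fintype.card ι := by
  rw [ENNReal.tsum_pi_prod (fun _ n => x ^ n), ENNReal.tsum_geometric, prod_const, card_univ]

lemma ENNReal.one_sub_two_rpow_neg_inv_ne_top {δ : ℝ} (hδ : 0 < δ) :
    (1 - (2 : ℝ≥0∞) ^ (-δ))⁻¹ ≠ ⊤ := by
  rw [Ne, ENNReal.inv_eq_top, tsub_eq_zero_iff_le, not_le]
  exact ENNReal.rpow_lt_one_of_one_lt_of_neg ENNReal.one_lt_two (neg_lt_zero.2 hδ)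

lemma sum_range_two_rpow_le (δ : ℝ) (K : ℕ) :
    ∑ m ∈ range (K + 1), (2 : ℝ≥0∞) ^ (δ * m) ≤ (1 - 2 ^ (-δ))⁻¹ * 2 ^ (δ * K) := by
  calc ∑ m ∈ range (K + 1), (2 : ℝ≥0∞) ^ (δ * m)
      = ∑ t ∈ range (K + 1), 2 ^ (δ * K) * (2 ^ (-δ)) ^ t := by
        rw [← sum_range_reflect, add_tsub_cancel_right]
        refine sum_congr rfl fun t ht => ?_
        rw [← ENNReal.rpow_natCast, ← ENNReal.rpow_mul,
          ← ENNReal.rpow_add _ _ two_ne_zero ENNReal.ofNat_ne_top,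
          Nat.cast_sub (by simpa [Nat.lt_succ_iff] using ht)]
        ring_nf
    _ ≤ 2 ^ (δ * K) * ∑' t : ℕ, (2 ^ (-δ)) ^ t := by
        rw [← mul_sum]
        exact mul_le_mul_right (ENNReal.sum_le_tsum _) _
    _ = (1 - 2 ^ (-δ))⁻¹ * 2 ^ (δ * K) := by rw [ENNReal.tsum_geometric, mul_comm]

lemma tsum_indicator_two_rpow_le {δ : ℝ} (hδ : 0 ≤ δ) (M : ℝ) :
    ∑' m : ℕ, {m : ℕ | (m : ℝ) ≤ M}.indicator (fun m => (2 : ℝ≥0∞) ^ (δ * m)) m ≤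
      (1 - 2 ^ (-δ))⁻¹ * 2 ^ (δ * M) := by
  rcases lt_or_ge M 0 with hM | hM
  · refine le_of_eq_of_le (ENNReal.tsum_eq_zero.2 fun m => Set.indicator_of_notMem ?_ _) zero_le
    simpa using hM.trans_le m.cast_nonneg
  set K := ⌊M⌋₊
  have hmem : ∀ m : ℕ, (m : ℝ) ≤ M ↔ m ∈ range (K + 1) := fun m => by
    rw [mem_range, Nat.lt_succ_iff, Nat.le_floor_iff hM]
  calc ∑' m : ℕ, {m : ℕ | (m : ℝ) ≤ M}.indicator (fun m => (2 : ℝ≥0∞) ^ (δ * m)) m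
      = ∑ m ∈ range (K + 1), (2 : ℝ≥0∞) ^ (δ * m) := by
        simp only [Set.indicator_apply, Set.mem_ofPred_eq, hmem]
        rw [tsum_eq_sum (s := range (K + 1)) fun m hm => if_neg hm]
        exact sum_congr rfl fun m hm => if_pos hm
    _ ≤ (1 - 2 ^ (-δ))⁻¹ * 2 ^ (δ * K) := sum_range_two_rpow_le δ K
    _ ≤ (1 - 2 ^ (-δ))⁻¹ * 2 ^ (δ * M) := by
        gcongr
        · exact one_le_two
        · exact Nat.floor_le hM

lemma tsum_indicator_shifted_le {α β δ : ℝ} (hαβ : β < α) (hδ : 0 ≤ δ) (μ s : ℝ) :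
    ∑' m : ℕ, {m : ℕ | α * (m + s) - β * m ≤ μ}.indicator
        (fun m => (2 : ℝ≥0∞) ^ (δ * (m + s))) m ≤
      (1 - 2 ^ (-δ))⁻¹ * 2 ^ (δ * μ / (α - β)) * 2 ^ (-(δ * β / (α - β)) * s) := by
  have hαβ' : 0 < α - β := sub_pos.2 hαβ
  set M := (μ - α * s) / (α - β)
  have hmem : ∀ m : ℕ, α * (m + s) - β * m ≤ μ ↔ (m : ℝ) ≤ M := fun m => by
    rw [le_div_iff₀ hαβ']
    constructor <;> intro h <;> linarith
  have hsplit : ∀ m : ℕ, (2 : ℝ≥0∞) ^ (δ * (m + s)) = 2 ^ (δ * s) * 2 ^ (δ * m) := fun m => by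
    rw [← ENNReal.rpow_add _ _ two_ne_zero ENNReal.ofNat_ne_top]
    ring_nf
  calc ∑' m : ℕ, {m : ℕ | α * (m + s) - β * m ≤ μ}.indicator
        (fun m => (2 : ℝ≥0∞) ^ (δ * (m + s))) m
      = 2 ^ (δ * s) * ∑' m : ℕ, {m : ℕ | (m : ℝ) ≤ M}.indicator
          (fun m => (2 : ℝ≥0∞) ^ (δ * m)) m := by
        rw [← ENNReal.tsum_mul_left]
        refine tsum_congr fun m => ?_
        simp only [Set.indicator_apply, Set.mem_ofPred_eq, hmem, hsplit, mul_ite, mul_zero]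
    _ ≤ 2 ^ (δ * s) * ((1 - 2 ^ (-δ))⁻¹ * 2 ^ (δ * M)) :=
        mul_le_mul_right (tsum_indicator_two_rpow_le hδ M) _
    _ = (1 - 2 ^ (-δ))⁻¹ * 2 ^ (δ * μ / (α - β)) * 2 ^ (-(δ * β / (α - β)) * s) := by
        rw [mul_left_comm, mul_assoc, ← ENNReal.rpow_add _ _ two_ne_zero ENNReal.ofNat_ne_top,
          ← ENNReal.rpow_add _ _ two_ne_zero ENNReal.ofNat_ne_top]
        congr 2
        simp only [M]
        field_simp
        ring

lemma tsum_indicator_coord_le {ι : Type*} [Fintype ι] [DecidableEq ι] {α β δ : ℝ}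
    (hαβ : β < α) (hδ : 0 ≤ δ) (μ : ℝ) (i : ι) :
    ∑' j : ι → ℕ, {j : ι → ℕ | α * ∑ l, (j l : ℝ) - β * j i ≤ μ}.indicator
        (fun j => (2 : ℝ≥0∞) ^ (δ * ∑ l, (j l : ℝ))) j ≤
      (1 - 2 ^ (-δ))⁻¹ * 2 ^ (δ * μ / (α - β)) *
        (1 - 2 ^ (-(δ * β / (α - β))))⁻¹ ^ (Fintype.card ι - 1) := by
  set ε := δ * β / (α - β)
  set e := (Equiv.funSplitAt i ℕ).trans (Equiv.prodComm _ _)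
  set g : ({l // l ≠ i} → ℕ) → ℕ → ℝ≥0∞ := fun k =>
    {m : ℕ | α * (m + ∑ l, (k l : ℝ)) - β * m ≤ μ}.indicator
      (fun m => (2 : ℝ≥0∞) ^ (δ * (m + ∑ l, (k l : ℝ))))
  have hsplit : ∀ j : ι → ℕ, {j : ι → ℕ | α * ∑ l, (j l : ℝ) - β * j i ≤ μ}.indicator
        (fun j => (2 : ℝ≥0∞) ^ (δ * ∑ l, (j l : ℝ))) j = g (e j).1 (e j).2 := fun j => by
    simp [g, e, Set.indicator_apply, Fintype.sum_eq_add_sum_subtype_ne _ i]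
  have hgeom : ∀ k : {l // l ≠ i} → ℕ,
      (2 : ℝ≥0∞) ^ (-ε * ∑ l, (k l : ℝ)) = ∏ l, (2 ^ (-ε)) ^ k l := fun k => by
    rw [← Nat.cast_sum, ENNReal.rpow_mul, ENNReal.rpow_natCast, prod_pow_eq_pow_sum]
  calc _ = ∑' k, ∑' m, g k m := by
        rw [tsum_congr hsplit, e.tsum_eq (fun p => g p.1 p.2), ENNReal.tsum_prod']
    _ ≤ ∑' k : {l // l ≠ i} → ℕ,
          (1 - 2 ^ (-δ))⁻¹ * 2 ^ (δ * μ / (α - β)) * 2 ^ (-ε * ∑ l, (k l : ℝ)) :=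
        ENNReal.tsum_le_tsum fun k => tsum_indicator_shifted_le hαβ hδ μ _
    _ = _ := by
        rw [ENNReal.tsum_mul_left, tsum_congr hgeom, ENNReal.tsum_pi_prod_pow]
        simp [Fintype.card_subtype_compl]

section AnisotropicIndexSet

variable {ι : Type*} [Fintype ι]

def anisotropicIndexSet (α β μ : ℝ) : Set (ι → ℕ) :=
  {j | α * ∑ i, (j i : ℝ) - β * ((univ.sup j : ℕ) : ℝ) ≤ μ}

lemma anisotropicIndexSet_subset_iUnion [Nonempty ι] (α β μ : ℝ) :
    anisotropicIndexSet α β μ ⊆ ⋃ i, {j : ι → ℕ | α * ∑ l, (j l : ℝ) - β * j i ≤ μ} := by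
  intro j hj
  obtain ⟨i, -, hi⟩ := exists_mem_eq_sup univ univ_nonempty j
  exact Set.mem_iUnion.2 ⟨i, by simpa [anisotropicIndexSet, hi] using hj⟩

lemma tsum_indicator_anisotropicIndexSet_le [Nonempty ι] {α β δ : ℝ} (hαβ : β < α) (hδ : 0 ≤ δ)
    (μ : ℝ) :
    ∑' j, (anisotropicIndexSet α β μ).indicator
        (fun j : ι → ℕ => (2 : ℝ≥0∞) ^ (δ * ∑ i, (j i : ℝ))) j ≤
      Fintype.card ι * ((1 - 2 ^ (-δ))⁻¹ *
        (1 - 2 ^ (-(δ * β / (α - β))))⁻¹ ^ (Fintype.card ι - 1)) * 2 ^ (δ * μ / (α - β)) := by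
  classical
  set w := fun j : ι → ℕ => (2 : ℝ≥0∞) ^ (δ * ∑ i, (j i : ℝ))
  set t := fun i : ι => {j : ι → ℕ | α * ∑ l, (j l : ℝ) - β * j i ≤ μ}
  calc ∑' j, (anisotropicIndexSet α β μ).indicator w j
      ≤ ∑' j : ↥(⋃ i, t i), w j := by
        rw [← _root_.tsum_subtype]
        exact ENNReal.tsum_mono_subtype w (anisotropicIndexSet_subset_iUnion α β μ)
    _ ≤ ∑ i, ∑' j, (t i).indicator w j := by
        simp only [← _root_.tsum_subtype]
        exact ENNReal.tsum_iUnion_le w t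
    _ ≤ ∑ _i : ι, (1 - 2 ^ (-δ))⁻¹ * 2 ^ (δ * μ / (α - β)) *
          (1 - 2 ^ (-(δ * β / (α - β))))⁻¹ ^ (Fintype.card ι - 1) :=
        sum_le_sum fun i _ => tsum_indicator_coord_le hαβ hδ μ i
    _ = _ := by
        rw [sum_const, card_univ, nsmul_eq_mul]
        ring

lemma two_rpow_le_tsum_indicator_anisotropicIndexSet [Nonempty ι] {α β δ : ℝ} (hαβ : β < α)
    (hδ : 0 ≤ δ) {μ : ℝ} (hμ : 0 ≤ μ) :
    2 ^ (-δ) * 2 ^ (δ * μ / (α - β)) ≤ ∑' j, (anisotropicIndexSet α β μ).indicator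
        (fun j : ι → ℕ => (2 : ℝ≥0∞) ^ (δ * ∑ i, (j i : ℝ))) j := by
  classical
  have hαβ' : 0 < α - β := sub_pos.2 hαβ
  set m := ⌊μ / (α - β)⌋₊
  set j₀ : ι → ℕ := Pi.single (Classical.arbitrary ι) m
  have hsum : ∑ l, (j₀ l : ℝ) = m := by
    rw [← Nat.cast_sum, sum_pi_single']
    simp
  have hmem : j₀ ∈ anisotropicIndexSet α β μ := by
    have : (α - β) * m ≤ μ := (le_div_iff₀' hαβ').1 (Nat.floor_le (div_nonneg hμ hαβ'.le))
    simp only [anisotropicIndexSet, Set.mem_ofPred_eq, hsum, j₀, Finset.univ_sup_pi_single]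
    linarith
  calc 2 ^ (-δ) * 2 ^ (δ * μ / (α - β))
      ≤ (2 : ℝ≥0∞) ^ (δ * m) := by
        rw [← ENNReal.rpow_add _ _ two_ne_zero ENNReal.ofNat_ne_top]
        refine ENNReal.rpow_le_rpow_of_exponent_le one_le_two ?_
        have : μ / (α - β) - 1 < m := Nat.sub_one_lt_floor _
        rw [mul_div_assoc]
        nlinarith
    _ = (anisotropicIndexSet α β μ).indicator
          (fun j : ι → ℕ => (2 : ℝ≥0∞) ^ (δ * ∑ i, (j i : ℝ))) j₀ := by
        rw [Set.indicator_of_mem hmem, hsum]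
    _ ≤ _ := ENNReal.le_tsum j₀

end AnisotropicIndexSet

/-- Counting lemma: for `α > β > 0` and `δ > 0`, the weighted sum
`∑_{j ∈ Δ_μ} 2^{δ|j|₁}` over the anisotropic index set
`Δ_μ = { j ∈ ℕ₀^d : α|j|₁ - β|j|∞ ≤ μ }` is `∼ 2^{δμ/(α-β)}` for `μ ≥ α - β`. -/
theorem counting_lemma (d : ℕ) (hd : 0 < d) (α β δ : ℝ) (hβ : 0 < β) (hαβ : β < α)
    (hδ : 0 < δ) :
    ∃ c C : ℝ, 0 < c ∧ 0 < C ∧ ∀ μ : ℕ, α - β ≤ (μ : ℝ) →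
      ENNReal.ofReal c * (2 : ℝ≥0∞) ^ (δ * (μ : ℝ) / (α - β)) ≤
        (∑' j : Fin d → ℕ,
          Set.indicator
            {j : Fin d → ℕ |
              α * (∑ i, (j i : ℝ)) - β * ((Finset.univ.sup j : ℕ) : ℝ) ≤ (μ : ℝ)}
            (fun j => (2 : ℝ≥0∞) ^ (δ * ∑ i, (j i : ℝ))) j) ∧
      (∑' j : Fin d → ℕ,
          Set.indicator
            {j : Fin d → ℕ |
              α * (∑ i, (j i : ℝ)) - β * ((Finset.univ.sup j : ℕ) : ℝ) ≤ (μ : ℝ)}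
            (fun j => (2 : ℝ≥0∞) ^ (δ * ∑ i, (j i : ℝ))) j) ≤
        ENNReal.ofReal C * (2 : ℝ≥0∞) ^ (δ * (μ : ℝ) / (α - β)) := by
  have : Nonempty (Fin d) := ⟨⟨0, hd⟩⟩
  set E : ℝ≥0∞ := Fintype.card (Fin d) * ((1 - 2 ^ (-δ))⁻¹ *
    (1 - 2 ^ (-(δ * β / (α - β))))⁻¹ ^ (Fintype.card (Fin d) - 1))
  have hE : E ≠ ⊤ := ENNReal.mul_ne_top (ENNReal.natCast_ne_top _) <|
    ENNReal.mul_ne_top (ENNReal.one_sub_two_rpow_neg_inv_ne_top hδ) <| ENNReal.pow_ne_top <|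
      ENNReal.one_sub_two_rpow_neg_inv_ne_top (div_pos (mul_pos hδ hβ) (sub_pos.2 hαβ))
  refine ⟨2 ^ (-δ), E.toReal + 1, by positivity, by positivity, fun μ _ => ⟨?_, ?_⟩⟩
  · rw [← ENNReal.ofReal_rpow_of_pos two_pos, ENNReal.ofReal_ofNat]
    exact two_rpow_le_tsum_indicator_anisotropicIndexSet hαβ hδ.le μ.cast_nonneg
  · refine (tsum_indicator_anisotropicIndexSet_le hαβ hδ.le μ).trans ?_
    gcongr
    exact (ENNReal.le_ofReal_iff_toReal_le hE (by positivity)).2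
      (le_add_of_nonneg_right zero_le_one)
end

section
/- Let $d \in \mathbb{N}$, $0 < p_0, p_1, q_0, q_1 \le \infty$, and $r_0, r_1, s_0, s_1 \in \mathbb{R}$ with $\alpha := r_0 - r_1 - (1/p_0 - 1/p_1)_+$ and $\beta := s_1 - s_0$. Assume the index sets satisfy $|\mathfrak{D}_j| \sim 2^{|j|_1}$. If $\alpha \ge 0 > \beta$, or $\alpha > \beta \ge 0$, or $0 > \alpha d > \beta$, then the identity map is a continuous embedding $h^{r_0,s_0}_{p_0,q_0}b(\nabla) \hookrightarrow h^{r_1,s_1}_{p_1,q_1}b(\nabla)$. -/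
/-!
On a single level `j` the block quasi-norms compare as
`‖·‖_{ℓ^{p₁}(𝔇_j)} ≤ |𝔇_j|^{(1/p₁ - 1/p₀)₊} ‖·‖_{ℓ^{p₀}(𝔇_j)}` (monotonicity of `ℓ^p` norms if
`p₀ ≤ p₁`, Hölder otherwise), and `|𝔇_j| ≲ 2^{|j|₁}`. Hence the `j`-th term of the target norm is
at most a constant times `2^{-α|j|₁ + β|j|∞}` times the `j`-th term of the source norm. Since
`|j|∞ ≤ |j|₁ ≤ d|j|∞`, each of the three conditions on `α, β` makes this exponent at most
`-δ|j|₁` for some `δ > 0`. Bounding the source terms by the `ℓ^∞ ⊇ ℓ^{q₀}` norm and summing the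
geometric series `∑_j 2^{-δ q₁ |j|₁} < ∞` gives the embedding for all `q₀, q₁`.
-/

open scoped ENNReal
open Finset

/-- The hybrid Besov sequence space quasi-norm `‖a | h^{r,s}_{p,q} b(∇)‖` for
`0 < p, q ≤ ∞`:
`(∑_j 2^{q((r-1/p)|j|₁ + s|j|∞)} (∑_{k ∈ 𝔇_j} |a_{j,k}|^p)^{q/p})^{1/q}`,
with the usual sup-modifications when `p = ∞` or `q = ∞`. -/
noncomputable def hybridNorm (d : ℕ) (D : (Fin d → ℕ) → Finset (Fin d → ℤ))
    (r s : ℝ) (p q : ℝ≥0∞) (a : (Fin d → ℕ) → (Fin d → ℤ) → ℂ) : ℝ≥0∞ :=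
  let G : (Fin d → ℕ) → ℝ≥0∞ := fun j =>
    if p = ∞ then (D j).sup (fun k => (‖a j k‖₊ : ℝ≥0∞))
    else (∑ k ∈ D j, (‖a j k‖₊ : ℝ≥0∞) ^ p.toReal) ^ (1 / p.toReal)
  let F : (Fin d → ℕ) → ℝ≥0∞ := fun j =>
    ENNReal.ofReal
        ((2 : ℝ) ^ ((r - p⁻¹.toReal) * (∑ i, (j i : ℝ)) +
          s * ((Finset.univ.sup j : ℕ) : ℝ))) * G j
  if q = ∞ then ⨆ j, F j else (∑' j, F j ^ q.toReal) ^ (1 / q.toReal)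

namespace ENNReal

variable {ι : Type*} (s : Finset ι) (g : ι → ℝ≥0∞)

lemma sum_rpow_rpow_le_of_le {a b : ℝ} (ha : 0 < a) (hab : a ≤ b) :
    (∑ k ∈ s, g k ^ b) ^ (1 / b) ≤ (∑ k ∈ s, g k ^ a) ^ (1 / a) := by
  have hb : 0 < b := ha.trans_le hab
  have hsub : (∑ k ∈ s, g k ^ b) ^ (a / b) ≤ ∑ k ∈ s, (g k ^ b) ^ (a / b) :=
    le_sum_of_subadditive (· ^ (a / b)) (zero_rpow_of_pos (by positivity)).le
      (fun x y => rpow_add_le_add_rpow x y (by positivity) ((div_le_one hb).2 hab)) s _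
  calc (∑ k ∈ s, g k ^ b) ^ (1 / b) = ((∑ k ∈ s, g k ^ b) ^ (a / b)) ^ (1 / a) := by
        rw [← rpow_mul]; congr 1; field_simp
    _ ≤ (∑ k ∈ s, g k ^ a) ^ (1 / a) := by
        gcongr
        refine hsub.trans_eq (sum_congr rfl fun k _ => ?_)
        rw [← rpow_mul]; congr 1; field_simp

lemma sum_rpow_rpow_le_card_rpow_mul {a b : ℝ} (hb : 0 < b) (hba : b < a) :
    (∑ k ∈ s, g k ^ b) ^ (1 / b) ≤
      (#s : ℝ≥0∞) ^ (1 / b - 1 / a) * (∑ k ∈ s, g k ^ a) ^ (1 / a) := by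
  have hholder := inner_le_weight_mul_Lp_of_nonneg s ((one_le_div hb).2 hba.le)
    (fun _ => 1) (fun k => g k ^ b)
  simp only [one_mul, sum_const, nsmul_eq_mul, mul_one, ← rpow_mul,
    mul_div_cancel₀ a hb.ne'] at hholder
  calc (∑ k ∈ s, g k ^ b) ^ (1 / b)
      ≤ ((#s : ℝ≥0∞) ^ (1 - (a / b)⁻¹) * (∑ k ∈ s, g k ^ a) ^ (a / b)⁻¹) ^ (1 / b) := by
        gcongr
    _ = (#s : ℝ≥0∞) ^ (1 / b - 1 / a) * (∑ k ∈ s, g k ^ a) ^ (1 / a) := by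
        rw [mul_rpow_of_nonneg _ _ (by positivity), ← rpow_mul, ← rpow_mul]
        congr 2 <;> field_simp

lemma sup_le_sum_rpow_rpow {a : ℝ} (ha : 0 < a) : s.sup g ≤ (∑ k ∈ s, g k ^ a) ^ (1 / a) :=
  Finset.sup_le fun k hk => by
    rw [one_div, ← rpow_rpow_inv ha.ne' (g k)]
    gcongr
    exact single_le_sum (f := fun k => g k ^ a) (fun _ _ => zero_le) hk

lemma sum_rpow_rpow_le_card_rpow_mul_sup {b : ℝ} (hb : 0 < b) :
    (∑ k ∈ s, g k ^ b) ^ (1 / b) ≤ (#s : ℝ≥0∞) ^ (1 / b) * s.sup g := by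
  calc (∑ k ∈ s, g k ^ b) ^ (1 / b) ≤ (∑ _k ∈ s, s.sup g ^ b) ^ (1 / b) := by
        gcongr with k hk; exact le_sup hk
    _ = (#s : ℝ≥0∞) ^ (1 / b) * s.sup g := by
        rw [sum_const, nsmul_eq_mul, mul_rpow_of_nonneg _ _ (by positivity),
          one_div, rpow_rpow_inv hb.ne']

lemma tsum_fin_pi_prod (d : ℕ) (g : ℕ → ℝ≥0∞) :
    ∑' j : Fin d → ℕ, ∏ i, g (j i) = (∑' n, g n) ^ d := by
  induction d with
  | zero => simp [tsum_fintype]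
  | succ d ih =>
    rw [← (Fin.consEquiv fun _ => ℕ).tsum_eq, ENNReal.tsum_prod', pow_succ']
    simp only [Fin.consEquiv_apply, Fin.prod_univ_succ, Fin.cons_zero, Fin.cons_succ,
      ENNReal.tsum_mul_left, ih, ENNReal.tsum_mul_right]

lemma tsum_fin_pi_pow_sum_lt_top (d : ℕ) {r : ℝ≥0∞} (hr : r < 1) :
    ∑' j : Fin d → ℕ, r ^ (∑ i, j i) < ∞ := by
  simp_rw [← prod_pow_eq_pow_sum, tsum_fin_pi_prod d (r ^ ·), ENNReal.tsum_geometric]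
  exact ENNReal.pow_lt_top (ENNReal.inv_lt_top.2 (tsub_pos_of_lt hr))

lemma tsum_two_rpow_neg_mul_sum_lt_top (d : ℕ) {c : ℝ} (hc : 0 < c) :
    ∑' j : Fin d → ℕ, ENNReal.ofReal ((2 : ℝ) ^ (-c * ∑ i, (j i : ℝ))) < ∞ := by
  have hterm : ∀ j : Fin d → ℕ, ENNReal.ofReal ((2 : ℝ) ^ (-c * ∑ i, (j i : ℝ))) =
      ENNReal.ofReal ((2 : ℝ) ^ (-c)) ^ (∑ i, j i) := fun j => by
    rw [← Nat.cast_sum, Real.rpow_mul zero_le_two, Real.rpow_natCast,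
      ENNReal.ofReal_pow (by positivity)]
  simp_rw [hterm]
  refine tsum_fin_pi_pow_sum_lt_top d ?_
  rw [← ENNReal.ofReal_one, ENNReal.ofReal_lt_ofReal_iff one_pos]
  exact Real.rpow_lt_one_of_one_lt_of_neg (by norm_num) (neg_neg_of_pos hc)

end ENNReal

lemma natCast_univ_sup_le_sum {ι : Type*} [Fintype ι] (j : ι → ℕ) :
    ((univ.sup j : ℕ) : ℝ) ≤ ∑ i, (j i : ℝ) := by
  exact_mod_cast Finset.sup_le fun i _ => single_le_sum (fun _ _ => Nat.zero_le _) (mem_univ i)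

lemma sum_le_card_mul_natCast_univ_sup {ι : Type*} [Fintype ι] (j : ι → ℕ) :
    ∑ i, (j i : ℝ) ≤ Fintype.card ι * ((univ.sup j : ℕ) : ℝ) := by
  exact_mod_cast (sum_le_card_nsmul univ j _ fun i _ => le_sup (mem_univ i)).trans_eq (by simp)

lemma exists_pos_decay_rate {d α β : ℝ} (hd : 0 < d)
    (h : (0 ≤ α ∧ β < 0) ∨ (β < α ∧ 0 ≤ β) ∨ (α * d < 0 ∧ β < α * d)) :
    ∃ δ > 0, ∀ x y : ℝ, 0 ≤ x → x ≤ y → y ≤ d * x → -α * y + β * x ≤ -δ * y := by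
  rcases h with ⟨hα, hβ⟩ | ⟨hαβ, hβ⟩ | ⟨hα, hβ⟩
  · refine ⟨-β / d, div_pos (neg_pos.2 hβ) hd, fun x y hx hxy hyx => ?_⟩
    have hβx : β * x ≤ β / d * y := by
      rw [div_mul_eq_mul_div, le_div_iff₀ hd]; nlinarith
    calc -α * y + β * x ≤ β / d * y := by nlinarith [mul_nonneg hα (hx.trans hxy)]
      _ = -(-β / d) * y := by ring
  · exact ⟨α - β, sub_pos.2 hαβ, fun x y hx hxy _ => by nlinarith⟩
  · have hα' : α < 0 := neg_of_mul_neg_left hα hd.le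
    refine ⟨(α * d - β) / d, div_pos (by linarith) hd, fun x y hx hxy hyx => ?_⟩
    have hxy' : (β - α * d) * x ≤ (β - α * d) / d * y := by
      rw [div_mul_eq_mul_div, le_div_iff₀ hd]; nlinarith
    have hαy : -α * y ≤ -α * (d * x) := by nlinarith
    calc -α * y + β * x ≤ (β - α * d) * x := by linarith
      _ ≤ (β - α * d) / d * y := hxy'
      _ = -((α * d - β) / d) * y := by ring

namespace HybridBesov

open ENNReal

noncomputable def blockNorm {ι : Type*} (p : ℝ≥0∞) (s : Finset ι) (g : ι → ℝ≥0∞) : ℝ≥0∞ :=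
  if p = ∞ then s.sup g else (∑ k ∈ s, g k ^ p.toReal) ^ (1 / p.toReal)

lemma blockNorm_le_card_rpow_mul {ι : Type*} (s : Finset ι) (g : ι → ℝ≥0∞) {p₀ p₁ : ℝ≥0∞}
    (hp₀ : 0 < p₀) (hp₁ : 0 < p₁) :
    blockNorm p₁ s g ≤ (#s : ℝ≥0∞) ^ max (p₁⁻¹.toReal - p₀⁻¹.toReal) 0 * blockNorm p₀ s g := by
  rcases eq_or_ne p₀ ∞ with rfl | h₀ <;> rcases eq_or_ne p₁ ∞ with rfl | h₁
  · simp [blockNorm]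
  · have hb := toReal_pos hp₁.ne' h₁
    rw [blockNorm, blockNorm, if_neg h₁, if_pos rfl, inv_top, toReal_zero, sub_zero,
      max_eq_left (by positivity), toReal_inv, ← one_div]
    exact sum_rpow_rpow_le_card_rpow_mul_sup s g hb
  · rw [blockNorm, blockNorm, if_pos rfl, if_neg h₀, inv_top, toReal_zero, zero_sub,
      max_eq_right (by simp), rpow_zero, one_mul]
    exact sup_le_sum_rpow_rpow s g (toReal_pos hp₀.ne' h₀)
  · have ha := toReal_pos hp₀.ne' h₀
    have hb := toReal_pos hp₁.ne' h₁
    rw [blockNorm, blockNorm, if_neg h₁, if_neg h₀, toReal_inv, toReal_inv]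
    rcases le_or_gt p₀.toReal p₁.toReal with hab | hab
    · rw [max_eq_right (sub_nonpos.2 (inv_anti₀ ha hab)), rpow_zero, one_mul]
      exact sum_rpow_rpow_le_of_le s g ha hab
    · rw [max_eq_left (sub_nonneg.2 (inv_anti₀ hb hab.le)), ← one_div, ← one_div]
      exact sum_rpow_rpow_le_card_rpow_mul s g hb hab

lemma ofReal_mul_blockNorm_le {ι : Type*} (s : Finset ι) (g : ι → ℝ≥0∞) {p₀ p₁ : ℝ≥0∞}
    (hp₀ : 0 < p₀) (hp₁ : 0 < p₁) {u₀ u₁ M : ℝ} (hu₀ : 0 ≤ u₀) (hu₁ : 0 ≤ u₁)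
    (h : u₁ * (#s : ℝ) ^ max (p₁⁻¹.toReal - p₀⁻¹.toReal) 0 ≤ M * u₀) :
    ENNReal.ofReal u₁ * blockNorm p₁ s g ≤
      ENNReal.ofReal M * (ENNReal.ofReal u₀ * blockNorm p₀ s g) := by
  calc ENNReal.ofReal u₁ * blockNorm p₁ s g
      ≤ ENNReal.ofReal u₁ *
          ((#s : ℝ≥0∞) ^ max (p₁⁻¹.toReal - p₀⁻¹.toReal) 0 * blockNorm p₀ s g) := by
        gcongr; exact blockNorm_le_card_rpow_mul s g hp₀ hp₁
    _ = ENNReal.ofReal (u₁ * (#s : ℝ) ^ max (p₁⁻¹.toReal - p₀⁻¹.toReal) 0) *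
          blockNorm p₀ s g := by
        rw [ofReal_mul hu₁, ← ofReal_rpow_of_nonneg (by positivity) (le_max_right _ _),
          ofReal_natCast, mul_assoc]
    _ ≤ ENNReal.ofReal (M * u₀) * blockNorm p₀ s g := by gcongr
    _ = ENNReal.ofReal M * (ENNReal.ofReal u₀ * blockNorm p₀ s g) := by
        rw [ofReal_mul' hu₀, mul_assoc]

noncomputable def seqNorm {J : Type*} (q : ℝ≥0∞) (F : J → ℝ≥0∞) : ℝ≥0∞ :=
  if q = ∞ then ⨆ j, F j else (∑' j, F j ^ q.toReal) ^ (1 / q.toReal)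

section seqNorm

variable {J : Type*} {q : ℝ≥0∞}

lemma le_seqNorm (hq : 0 < q) (F : J → ℝ≥0∞) (j : J) : F j ≤ seqNorm q F := by
  rw [seqNorm]
  split_ifs with h
  · exact le_iSup F j
  · have hq' := toReal_pos hq.ne' h
    rw [one_div, ← rpow_rpow_inv hq'.ne' (F j)]
    gcongr
    exact ENNReal.le_tsum j

lemma seqNorm_mono {F G : J → ℝ≥0∞} (h : ∀ j, F j ≤ G j) : seqNorm q F ≤ seqNorm q G := by
  rw [seqNorm, seqNorm]
  split_ifs
  · exact iSup_mono h
  · gcongr with j; exact h j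

lemma seqNorm_mul_const (hq : 0 < q) (F : J → ℝ≥0∞) (c : ℝ≥0∞) :
    seqNorm q (fun j => F j * c) = seqNorm q F * c := by
  rw [seqNorm, seqNorm]
  split_ifs with h
  · exact (ENNReal.iSup_mul F c).symm
  · have hq' := toReal_pos hq.ne' h
    simp_rw [mul_rpow_of_nonneg _ _ hq'.le]
    rw [ENNReal.tsum_mul_right, mul_rpow_of_nonneg _ _ (by positivity),
      one_div, rpow_rpow_inv hq'.ne']

lemma seqNorm_le_mul_seqNorm_of_le_mul {q₀ q₁ : ℝ≥0∞} (hq₀ : 0 < q₀) (hq₁ : 0 < q₁)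
    {F₀ F₁ w : J → ℝ≥0∞} (h : ∀ j, F₁ j ≤ w j * F₀ j) :
    seqNorm q₁ F₁ ≤ seqNorm q₁ w * seqNorm q₀ F₀ := by
  rw [← seqNorm_mul_const hq₁]
  exact seqNorm_mono fun j => (h j).trans (by gcongr; exact le_seqNorm hq₀ F₀ j)

end seqNorm

lemma seqNorm_two_rpow_neg_mul_sum_lt_top {d : ℕ} {q : ℝ≥0∞} (hq : 0 < q) {δ : ℝ}
    (hδ : 0 < δ) :
    seqNorm q (fun j : Fin d → ℕ => ENNReal.ofReal ((2 : ℝ) ^ (-δ * ∑ i, (j i : ℝ)))) < ∞ := by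
  rw [seqNorm]
  split_ifs with h
  · refine (iSup_le fun j => ?_).trans_lt one_lt_top
    rw [← ofReal_one]
    refine ofReal_le_ofReal (Real.rpow_le_one_of_one_le_of_nonpos one_le_two ?_)
    exact mul_nonpos_of_nonpos_of_nonneg (neg_nonpos.2 hδ.le) (by positivity)
  · have hq' := toReal_pos hq.ne' h
    refine rpow_lt_top_of_nonneg (by positivity) (ne_of_lt ?_)
    convert ENNReal.tsum_two_rpow_neg_mul_sum_lt_top d (mul_pos hδ hq') using 3 with j
    rw [ofReal_rpow_of_nonneg (by positivity) hq'.le, ← Real.rpow_mul zero_le_two]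
    ring_nf

noncomputable def hybridLevel (d : ℕ) (D : (Fin d → ℕ) → Finset (Fin d → ℤ)) (r s : ℝ)
    (p : ℝ≥0∞) (a : (Fin d → ℕ) → (Fin d → ℤ) → ℂ) (j : Fin d → ℕ) : ℝ≥0∞ :=
  ENNReal.ofReal ((2 : ℝ) ^ ((r - p⁻¹.toReal) * (∑ i, (j i : ℝ)) +
      s * ((Finset.univ.sup j : ℕ) : ℝ))) *
    blockNorm p (D j) fun k => (‖a j k‖₊ : ℝ≥0∞)

lemma hybridNorm_eq_seqNorm (d : ℕ) (D : (Fin d → ℕ) → Finset (Fin d → ℤ)) (r s : ℝ)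
    (p q : ℝ≥0∞) (a : (Fin d → ℕ) → (Fin d → ℤ) → ℂ) :
    hybridNorm d D r s p q a = seqNorm q (hybridLevel d D r s p a) :=
  rfl

lemma hybridLevel_le {d : ℕ} {D : (Fin d → ℕ) → Finset (Fin d → ℤ)} {p₀ p₁ : ℝ≥0∞}
    (hp₀ : 0 < p₀) (hp₁ : 0 < p₁) {r₀ r₁ s₀ s₁ c δ : ℝ} (hc : 0 < c)
    (a : (Fin d → ℕ) → (Fin d → ℤ) → ℂ) (j : Fin d → ℕ)
    (hcard : (#(D j) : ℝ) ≤ c * 2 ^ ∑ i, (j i : ℝ))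
    (hdecay : -(r₀ - r₁ - max (p₀⁻¹.toReal - p₁⁻¹.toReal) 0) * ∑ i, (j i : ℝ) +
      (s₁ - s₀) * ((univ.sup j : ℕ) : ℝ) ≤ -δ * ∑ i, (j i : ℝ)) :
    hybridLevel d D r₁ s₁ p₁ a j ≤
      ENNReal.ofReal ((2 : ℝ) ^ (-δ * ∑ i, (j i : ℝ)) *
        c ^ max (p₁⁻¹.toReal - p₀⁻¹.toReal) 0) * hybridLevel d D r₀ s₀ p₀ a j := by
  set y := ∑ i, (j i : ℝ)
  set x := ((univ.sup j : ℕ) : ℝ)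
  have hslope : r₁ - p₁⁻¹.toReal + max (p₁⁻¹.toReal - p₀⁻¹.toReal) 0 - (r₀ - p₀⁻¹.toReal) =
      -(r₀ - r₁ - max (p₀⁻¹.toReal - p₁⁻¹.toReal) 0) := by
    rcases le_total p₀⁻¹.toReal p₁⁻¹.toReal with h | h
    · rw [max_eq_left (sub_nonneg.2 h), max_eq_right (sub_nonpos.2 h)]; ring
    · rw [max_eq_right (sub_nonpos.2 h), max_eq_left (sub_nonneg.2 h)]; ring
  set t := max (p₁⁻¹.toReal - p₀⁻¹.toReal) 0
  have hexp : (r₁ - p₁⁻¹.toReal) * y + s₁ * x + t * y ≤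
      -δ * y + ((r₀ - p₀⁻¹.toReal) * y + s₀ * x) := by
    linear_combination hdecay + y * hslope
  refine ofReal_mul_blockNorm_le _ _ hp₀ hp₁ (by positivity) (by positivity) ?_
  calc (2 : ℝ) ^ ((r₁ - p₁⁻¹.toReal) * y + s₁ * x) * (#(D j) : ℝ) ^ t
      ≤ (2 : ℝ) ^ ((r₁ - p₁⁻¹.toReal) * y + s₁ * x) * (c * 2 ^ y) ^ t := by gcongr
    _ = c ^ t * (2 : ℝ) ^ ((r₁ - p₁⁻¹.toReal) * y + s₁ * x + t * y) := by
        rw [Real.mul_rpow hc.le (by positivity), ← Real.rpow_mul zero_le_two, mul_comm y t,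
          Real.rpow_add two_pos ((r₁ - p₁⁻¹.toReal) * y + s₁ * x) (t * y)]
        ring
    _ ≤ c ^ t * (2 : ℝ) ^ (-δ * y + ((r₀ - p₀⁻¹.toReal) * y + s₀ * x)) := by
        gcongr; norm_num
    _ = (2 : ℝ) ^ (-δ * y) * c ^ t * (2 : ℝ) ^ ((r₀ - p₀⁻¹.toReal) * y + s₀ * x) := by
        rw [Real.rpow_add two_pos (-δ * y)]; ring

end HybridBesov

open HybridBesov ENNReal in
/-- Sobolev-type embeddings of hybrid Besov sequence spaces
(Lemma "Change of integrability and/or smoothness I"): with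
`α = r₀ - r₁ - (1/p₀ - 1/p₁)₊` and `β = s₁ - s₀`, assuming `|𝔇_j| ∼ 2^{|j|₁}`,
if `α ≥ 0 > β`, or `α > β ≥ 0`, or `0 > αd > β`, then
`h^{r₀,s₀}_{p₀,q₀}b(∇) ↪ h^{r₁,s₁}_{p₁,q₁}b(∇)`. -/
theorem hybrid_embedding (d : ℕ) (hd : 0 < d)
    (D : (Fin d → ℕ) → Finset (Fin d → ℤ))
    (hD : ∃ c₁ c₂ : ℝ, 0 < c₁ ∧ 0 < c₂ ∧ ∀ j : Fin d → ℕ,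
      c₁ * (2 : ℝ) ^ (∑ i, (j i : ℝ)) ≤ ((D j).card : ℝ) ∧
      ((D j).card : ℝ) ≤ c₂ * (2 : ℝ) ^ (∑ i, (j i : ℝ)))
    (p₀ p₁ q₀ q₁ : ℝ≥0∞) (hp₀ : 0 < p₀) (hp₁ : 0 < p₁) (hq₀ : 0 < q₀) (hq₁ : 0 < q₁)
    (r₀ r₁ s₀ s₁ : ℝ)
    (hcase :
      (0 ≤ r₀ - r₁ - max (p₀⁻¹.toReal - p₁⁻¹.toReal) 0 ∧ s₁ - s₀ < 0) ∨
      (s₁ - s₀ < r₀ - r₁ - max (p₀⁻¹.toReal - p₁⁻¹.toReal) 0 ∧ 0 ≤ s₁ - s₀) ∨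
      ((r₀ - r₁ - max (p₀⁻¹.toReal - p₁⁻¹.toReal) 0) * d < 0 ∧
        s₁ - s₀ < (r₀ - r₁ - max (p₀⁻¹.toReal - p₁⁻¹.toReal) 0) * d)) :
    ∃ C : ℝ, 0 < C ∧ ∀ a : (Fin d → ℕ) → (Fin d → ℤ) → ℂ,
      hybridNorm d D r₁ s₁ p₁ q₁ a ≤
        ENNReal.ofReal C * hybridNorm d D r₀ s₀ p₀ q₀ a := by
  obtain ⟨_, c, _, hc, hcard⟩ := hD
  obtain ⟨δ, hδ, hdecay⟩ := exists_pos_decay_rate (Nat.cast_pos.2 hd) hcase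
  set w : (Fin d → ℕ) → ℝ≥0∞ := fun j => ENNReal.ofReal ((2 : ℝ) ^ (-δ * ∑ i, (j i : ℝ))) *
    ENNReal.ofReal (c ^ max (p₁⁻¹.toReal - p₀⁻¹.toReal) 0)
  have hw : seqNorm q₁ w ≠ ∞ := by
    rw [seqNorm_mul_const hq₁]
    exact mul_ne_top (seqNorm_two_rpow_neg_mul_sum_lt_top hq₁ hδ).ne ofReal_ne_top
  refine ⟨(seqNorm q₁ w).toReal + 1, by positivity, fun a => ?_⟩
  have hlevel : ∀ j, hybridLevel d D r₁ s₁ p₁ a j ≤ w j * hybridLevel d D r₀ s₀ p₀ a j := by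
    intro j
    rw [show w j = _ from (ofReal_mul (by positivity)).symm]
    refine hybridLevel_le hp₀ hp₁ hc a j (hcard j).2 (hdecay _ _ (Nat.cast_nonneg _)
      (natCast_univ_sup_le_sum j) ?_)
    simpa using sum_le_card_mul_natCast_univ_sup j
  rw [hybridNorm_eq_seqNorm, hybridNorm_eq_seqNorm]
  calc seqNorm q₁ (hybridLevel d D r₁ s₁ p₁ a)
      ≤ seqNorm q₁ w * seqNorm q₀ (hybridLevel d D r₀ s₀ p₀ a) :=
        seqNorm_le_mul_seqNorm_of_le_mul hq₀ hq₁ hlevel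
    _ ≤ ENNReal.ofReal ((seqNorm q₁ w).toReal + 1) *
          seqNorm q₀ (hybridLevel d D r₀ s₀ p₀ a) := by
        rw [ofReal_add toReal_nonneg zero_le_one, ofReal_toReal hw]
        gcongr
        exact le_self_add
end

section
/- Let $d \in \mathbb{N}$, $0 < p_0, p_1, q_0, q_1 \le \infty$, and $r_0, r_1, s_0, s_1 \in \mathbb{R}$ with $r_0 - r_1 - (1/p_0 - 1/p_1)_+ > s_1 - s_0 > 0$. Then for all sufficiently large $m$, $d_m\big( \mathrm{id} : h^{r_0,s_0}_{p_0,q_0}b(\nabla) \to h^{r_1,s_1}_{p_1,q_1}b(\nabla); E \big) \gtrsim m^{-[(r_0-r_1)-(s_1-s_0)-(1/p_0-1/p_1)_+]}$, where $E$ is the dictionary of unit coordinate vectors. -/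
open scoped ENNReal

/-- The `m`-th Kolmogorov dictionary width of
`id : h^{r₀,s₀}_{p₀,q₀}b(∇) → h^{r₁,s₁}_{p₁,q₁}b(∇)` with respect to the
dictionary `E` of unit coordinate vectors: the infimum over index sets `Λ` of
cardinality `≤ m` of the worst-case (over the unit ball of the source space)
best approximation error, in the target norm, by sequences supported on `Λ`. -/
noncomputable def kolmogorovWidth (d : ℕ) (D : (Fin d → ℕ) → Finset (Fin d → ℤ))
    (r₀ s₀ : ℝ) (p₀ q₀ : ℝ≥0∞) (r₁ s₁ : ℝ) (p₁ q₁ : ℝ≥0∞) (m : ℕ) : ℝ≥0∞ :=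
  ⨅ (Λ : Finset ((Fin d → ℕ) × (Fin d → ℤ))) (_ : Λ.card ≤ m),
    ⨆ (a : (Fin d → ℕ) → (Fin d → ℤ) → ℂ) (_ : hybridNorm d D r₀ s₀ p₀ q₀ a ≤ 1),
      ⨅ (b : (Fin d → ℕ) → (Fin d → ℤ) → ℂ) (_ : ∀ j k, (j, k) ∉ Λ → b j k = 0),
        hybridNorm d D r₁ s₁ p₁ q₁ (fun j k => a j k - b j k)

/-!
The lower bound is witnessed on the single level `j = L e₀` with `2 ^ L ≍ m`, chosen so that
`|𝔇_j| ≥ 4m`. An index set `Λ` with `|Λ| ≤ m` misses some coefficient of this level, and even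
three quarters of it. Approximating from `Λ` a normalized spike on a missed coefficient costs at
least the ratio of the level weights, `2 ^ (-L ((r₀ - r₁) - (s₁ - s₀) - (1/p₀ - 1/p₁)))`; this is
the right test when `p₀ ≤ p₁`. When `p₀ > p₁`, approximating the normalized constant block on the
whole level costs that ratio times `|𝔇_j| ^ (1/p₁ - 1/p₀) ≍ 2 ^ (L (1/p₁ - 1/p₀))`. In both cases
the bound is `≍ m ^ (-[(r₀ - r₁) - (s₁ - s₀) - (1/p₀ - 1/p₁)₊])`.
-/

namespace Finset

theorem card_sub_card_le_card_filter_notMem {α β : Type*} [DecidableEq α] [DecidableEq β]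
    (Λ : Finset (α × β)) (x : α) (S : Finset β) :
    #S - #Λ ≤ #(S.filter fun k => (x, k) ∉ Λ) := by
  have hin : #(S.filter fun k => (x, k) ∈ Λ) ≤ #Λ :=
    card_le_card_of_injOn (fun k => (x, k)) (fun k hk => (mem_filter.1 hk).2)
      fun k _ k' _ h => (Prod.mk.inj h).2
  have := card_filter_add_card_filter_not (s := S) fun k => (x, k) ∈ Λ
  omega

end Finset

theorem Nat.exists_pow_mem_Ioc {b N : ℕ} (hb : 1 < b) (hN : N ≠ 0) :
    ∃ L : ℕ, N < b ^ L ∧ b ^ L ≤ b * N :=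
  ⟨Nat.log b N + 1, Nat.lt_pow_succ_log_self hb N, by
    rw [pow_succ, mul_comm]
    exact Nat.mul_le_mul_left b (Nat.pow_log_le_self b hN)⟩

theorem Real.min_rpow_mul_rpow_le_rpow {x y a b t : ℝ} (hy : 0 < y) (ha : 0 < a)
    (hax : a * y ≤ x) (hxb : x ≤ b * y) : min (a ^ t) (b ^ t) * y ^ t ≤ x ^ t := by
  have hx : x = x / y * y := by field_simp
  have hlo : a ≤ x / y := (le_div_iff₀ hy).2 hax
  have hhi : x / y ≤ b := (div_le_iff₀ hy).2 hxb
  rw [hx, Real.mul_rpow (ha.le.trans hlo) hy.le]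
  gcongr
  rcases le_total 0 t with ht | ht
  · exact min_le_of_left_le (Real.rpow_le_rpow ha.le hlo ht)
  · exact min_le_of_right_le (Real.rpow_le_rpow_of_nonpos (ha.trans_le hlo) hhi ht)

theorem Real.mul_rpow_le_sub_rpow_div_rpow {n m c P u₀ u₁ : ℝ} (hc : 0 < c) (hP : 0 < P)
    (hn : c * P ≤ n) (hm : 4 * m ≤ n) (hu : u₀ ≤ u₁) (hu₁ : 0 ≤ u₁) :
    (3 / 4) ^ u₁ * c ^ (u₁ - u₀) * P ^ (u₁ - u₀) ≤ (n - m) ^ u₁ / n ^ u₀ := by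
  have hn₀ : 0 < n := (mul_pos hc hP).trans_le hn
  have hu' : 0 ≤ u₁ - u₀ := sub_nonneg.2 hu
  calc (3 / 4) ^ u₁ * c ^ (u₁ - u₀) * P ^ (u₁ - u₀) = (3 / 4) ^ u₁ * (c * P) ^ (u₁ - u₀) := by
        rw [Real.mul_rpow hc.le hP.le, mul_assoc]
    _ ≤ (3 / 4) ^ u₁ * n ^ (u₁ - u₀) := by gcongr
    _ = (3 / 4 * n) ^ u₁ / n ^ u₀ := by
        rw [Real.mul_rpow (by norm_num) hn₀.le, Real.rpow_sub hn₀, mul_div_assoc]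
    _ ≤ (n - m) ^ u₁ / n ^ u₀ := by
        gcongr
        linarith

namespace HybridBesov

open Finset

variable {d : ℕ}

noncomputable def levelWeight (r s : ℝ) (p : ℝ≥0∞) (j : Fin d → ℕ) : ℝ :=
  (2 : ℝ) ^ ((r - p⁻¹.toReal) * (∑ i, (j i : ℝ)) + s * ((univ.sup j : ℕ) : ℝ))

noncomputable def levelNorm (D : (Fin d → ℕ) → Finset (Fin d → ℤ)) (p : ℝ≥0∞)
    (a : (Fin d → ℕ) → (Fin d → ℤ) → ℂ) (j : Fin d → ℕ) : ℝ≥0∞ :=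
  if p = ∞ then (D j).sup (fun k => (‖a j k‖₊ : ℝ≥0∞))
  else (∑ k ∈ D j, (‖a j k‖₊ : ℝ≥0∞) ^ p.toReal) ^ (1 / p.toReal)

theorem levelWeight_pos (r s : ℝ) (p : ℝ≥0∞) (j : Fin d → ℕ) : 0 < levelWeight r s p j := by
  unfold levelWeight
  positivity

variable (D : (Fin d → ℕ) → Finset (Fin d → ℤ)) {r s : ℝ} {p q : ℝ≥0∞}
  {a b : (Fin d → ℕ) → (Fin d → ℤ) → ℂ}

theorem hybridNorm_eq_levelNorm (a : (Fin d → ℕ) → (Fin d → ℤ) → ℂ) :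
    hybridNorm d D r s p q a =
      if q = ∞ then ⨆ j, ENNReal.ofReal (levelWeight r s p j) * levelNorm D p a j
      else (∑' j, (ENNReal.ofReal (levelWeight r s p j) * levelNorm D p a j) ^ q.toReal) ^
        (1 / q.toReal) :=
  rfl

theorem levelNorm_mono {j : Fin d → ℕ} (h : ∀ k, ‖a j k‖ ≤ ‖b j k‖) :
    levelNorm D p a j ≤ levelNorm D p b j := by
  unfold levelNorm
  split_ifs
  · exact Finset.sup_mono_fun fun k _ => by exact_mod_cast h k
  · gcongr with k
    exact_mod_cast h k

theorem hybridNorm_mono (h : ∀ j k, ‖a j k‖ ≤ ‖b j k‖) :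
    hybridNorm d D r s p q a ≤ hybridNorm d D r s p q b := by
  rw [hybridNorm_eq_levelNorm, hybridNorm_eq_levelNorm]
  split_ifs <;> gcongr with j <;> exact levelNorm_mono D (h j)

theorem levelNorm_eq_zero (hp : p ≠ 0) {j : Fin d → ℕ} (h : ∀ k, a j k = 0) :
    levelNorm D p a j = 0 := by
  unfold levelNorm
  split_ifs with hpi
  · simp [h]
  · have hpt : 0 < p.toReal := ENNReal.toReal_pos hp hpi
    simp [h, ENNReal.zero_rpow_of_pos hpt, hpt]

theorem hybridNorm_eq_of_levelNorm_eq_zero (hq : q ≠ 0) {j₀ : Fin d → ℕ}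
    (h : ∀ j ≠ j₀, levelNorm D p a j = 0) :
    hybridNorm d D r s p q a = ENNReal.ofReal (levelWeight r s p j₀) * levelNorm D p a j₀ := by
  rw [hybridNorm_eq_levelNorm]
  split_ifs with hqi
  · refine le_antisymm (iSup_le fun j => ?_) (le_iSup_of_le j₀ le_rfl)
    rcases eq_or_ne j j₀ with rfl | hj
    · rfl
    · simp only [h j hj, mul_zero, zero_le]
  · have hqt : 0 < q.toReal := ENNReal.toReal_pos hq hqi
    rw [tsum_eq_single j₀ fun j hj => by rw [h j hj, mul_zero, ENNReal.zero_rpow_of_pos hqt],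
      ← ENNReal.rpow_mul, mul_one_div_cancel hqt.ne', ENNReal.rpow_one]

noncomputable def levelIndicator (j₀ : Fin d → ℕ) (S : Finset (Fin d → ℤ)) (c : ℝ) :
    (Fin d → ℕ) → (Fin d → ℤ) → ℂ :=
  fun j k => if j = j₀ ∧ k ∈ S then (c : ℂ) else 0

variable {j₀ : Fin d → ℕ} {S : Finset (Fin d → ℤ)} {c : ℝ}

-- For `p = ∞` the exponent `p⁻¹.toReal` is `0`, matching the sup-norm of a constant.
theorem levelNorm_levelIndicator (hp : p ≠ 0) (hS : S ⊆ D j₀) (hne : S.Nonempty) (hc : 0 ≤ c) :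
    levelNorm D p (levelIndicator j₀ S c) j₀ = ENNReal.ofReal (c * (#S : ℝ) ^ p⁻¹.toReal) := by
  have hval : ∀ k, (‖levelIndicator j₀ S c j₀ k‖₊ : ℝ≥0∞) =
      if k ∈ S then ENNReal.ofReal c else 0 := fun k => by
    by_cases hk : k ∈ S
    · simp only [levelIndicator, true_and, hk, if_true, Complex.nnnorm_real, ← enorm_eq_nnnorm,
        Real.enorm_eq_ofReal hc]
    · simp [levelIndicator, hk]
  unfold levelNorm
  simp_rw [hval]
  split_ifs with hpi
  · obtain ⟨k₀, hk₀⟩ := hne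
    refine le_antisymm (Finset.sup_le fun k _ => ?_) (le_trans ?_ (Finset.le_sup (hS hk₀)))
    · split_ifs <;> simp [hpi]
    · simp [hk₀, hpi]
  · have hpt : 0 < p.toReal := ENNReal.toReal_pos hp hpi
    have hpow : ∀ k, (if k ∈ S then ENNReal.ofReal c else 0) ^ p.toReal =
        if k ∈ S then ENNReal.ofReal c ^ p.toReal else 0 := fun k => by
      split_ifs <;> simp [hpt]
    simp_rw [hpow]
    rw [Finset.sum_ite_mem, Finset.inter_eq_right.mpr hS, Finset.sum_const, nsmul_eq_mul,
      ENNReal.mul_rpow_of_nonneg _ _ (by positivity), ← ENNReal.rpow_mul,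
      mul_one_div_cancel hpt.ne', ENNReal.rpow_one, mul_comm, ENNReal.ofReal_mul hc,
      ← ENNReal.ofReal_natCast, ENNReal.ofReal_rpow_of_nonneg (Nat.cast_nonneg _) (by positivity),
      ENNReal.toReal_inv, one_div]

theorem hybridNorm_levelIndicator (hp : p ≠ 0) (hq : q ≠ 0) (hS : S ⊆ D j₀) (hne : S.Nonempty)
    (hc : 0 ≤ c) :
    hybridNorm d D r s p q (levelIndicator j₀ S c) =
      ENNReal.ofReal (levelWeight r s p j₀ * c * (#S : ℝ) ^ p⁻¹.toReal) := by
  rw [hybridNorm_eq_of_levelNorm_eq_zero D hq (j₀ := j₀) fun j hj =>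
      levelNorm_eq_zero D hp fun k => by simp [levelIndicator, hj],
    levelNorm_levelIndicator D hp hS hne hc, ← ENNReal.ofReal_mul (levelWeight_pos r s p j₀).le,
    mul_assoc]

theorem ofReal_le_hybridNorm_of_eq_on (hp : p ≠ 0) (hq : q ≠ 0) (hS : S ⊆ D j₀)
    (hne : S.Nonempty) (hc : 0 ≤ c) (ha : ∀ k ∈ S, a j₀ k = c) :
    ENNReal.ofReal (levelWeight r s p j₀ * c * (#S : ℝ) ^ p⁻¹.toReal) ≤
      hybridNorm d D r s p q a := by
  rw [← hybridNorm_levelIndicator D hp hq hS hne hc]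
  refine hybridNorm_mono D fun j k => ?_
  unfold levelIndicator
  split_ifs with h
  · rw [h.1, ha k h.2]
  · simp

variable {r₀ s₀ r₁ s₁ : ℝ} {p₀ q₀ p₁ q₁ : ℝ≥0∞} {m : ℕ}

theorem le_kolmogorovWidth_of_levelIndicator (hp₀ : p₀ ≠ 0) (hq₀ : q₀ ≠ 0) (hp₁ : p₁ ≠ 0)
    (hq₁ : q₁ ≠ 0) {ε : ℝ}
    (h : ∀ Λ : Finset ((Fin d → ℕ) × (Fin d → ℤ)), #Λ ≤ m → ∃ S T : Finset (Fin d → ℤ),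
      T ⊆ S ∧ S ⊆ D j₀ ∧ T.Nonempty ∧ (∀ k ∈ T, (j₀, k) ∉ Λ) ∧
      ε ≤ levelWeight r₁ s₁ p₁ j₀ / levelWeight r₀ s₀ p₀ j₀ * (#T : ℝ) ^ p₁⁻¹.toReal /
        (#S : ℝ) ^ p₀⁻¹.toReal) :
    ENNReal.ofReal ε ≤ kolmogorovWidth d D r₀ s₀ p₀ q₀ r₁ s₁ p₁ q₁ m := by
  refine le_iInf₂ fun Λ hΛ => ?_
  obtain ⟨S, T, hTS, hSD, hT, hTΛ, hε⟩ := h Λ hΛ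
  have hW₀ := levelWeight_pos r₀ s₀ p₀ j₀
  have hS : 0 < (#S : ℝ) := by exact_mod_cast (hT.mono hTS).card_pos
  set c := (levelWeight r₀ s₀ p₀ j₀ * (#S : ℝ) ^ p₀⁻¹.toReal)⁻¹
  have hc : 0 < c := by positivity
  have hnorm : hybridNorm d D r₀ s₀ p₀ q₀ (levelIndicator j₀ S c) ≤ 1 := by
    rw [hybridNorm_levelIndicator D hp₀ hq₀ hSD (hT.mono hTS) hc.le, mul_right_comm,
      mul_inv_cancel₀ (by positivity), ENNReal.ofReal_one]
  refine le_iSup₂_of_le (levelIndicator j₀ S c) hnorm (le_iInf₂ fun b hb => ?_)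
  refine le_trans (ENNReal.ofReal_le_ofReal ?_)
    (ofReal_le_hybridNorm_of_eq_on D hp₁ hq₁ (hTS.trans hSD) hT hc.le fun k hk => ?_)
  · calc ε ≤ _ := hε
      _ = _ := by
        simp only [c]
        field_simp
  · simp [levelIndicator, hTS hk, hb _ _ (hTΛ k hk)]

theorem levelWeight_div_le_kolmogorovWidth (hp₀ : p₀ ≠ 0) (hq₀ : q₀ ≠ 0) (hp₁ : p₁ ≠ 0)
    (hq₁ : q₁ ≠ 0) (hm : m < #(D j₀)) :
    ENNReal.ofReal (levelWeight r₁ s₁ p₁ j₀ / levelWeight r₀ s₀ p₀ j₀) ≤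
      kolmogorovWidth d D r₀ s₀ p₀ q₀ r₁ s₁ p₁ q₁ m := by
  refine le_kolmogorovWidth_of_levelIndicator D (j₀ := j₀) hp₀ hq₀ hp₁ hq₁ fun Λ hΛ => ?_
  have hfree := Finset.card_sub_card_le_card_filter_notMem Λ j₀ (D j₀)
  obtain ⟨k, hk⟩ : ((D j₀).filter fun k => (j₀, k) ∉ Λ).Nonempty := card_pos.1 (by omega)
  obtain ⟨hkD, hkΛ⟩ := mem_filter.1 hk
  refine ⟨{k}, {k}, subset_rfl, singleton_subset_iff.2 hkD, singleton_nonempty k,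
    fun k' hk' => mem_singleton.1 hk' ▸ hkΛ, ?_⟩
  simp

theorem levelWeight_div_mul_card_sub_le_kolmogorovWidth (hp₀ : p₀ ≠ 0) (hq₀ : q₀ ≠ 0)
    (hp₁ : p₁ ≠ 0) (hq₁ : q₁ ≠ 0) (hm : m < #(D j₀)) :
    ENNReal.ofReal (levelWeight r₁ s₁ p₁ j₀ / levelWeight r₀ s₀ p₀ j₀ *
        ((#(D j₀) : ℝ) - m) ^ p₁⁻¹.toReal / (#(D j₀) : ℝ) ^ p₀⁻¹.toReal) ≤
      kolmogorovWidth d D r₀ s₀ p₀ q₀ r₁ s₁ p₁ q₁ m := by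
  refine le_kolmogorovWidth_of_levelIndicator D (j₀ := j₀) hp₀ hq₀ hp₁ hq₁ fun Λ hΛ => ?_
  set T := (D j₀).filter fun k => (j₀, k) ∉ Λ
  have hT : #(D j₀) - m ≤ #T := by
    have : #(D j₀) - #Λ ≤ #T := Finset.card_sub_card_le_card_filter_notMem Λ j₀ (D j₀)
    omega
  refine ⟨D j₀, T, filter_subset _ _, subset_rfl, card_pos.1 (by omega),
    fun k hk => (mem_filter.1 hk).2, ?_⟩
  have := levelWeight_pos r₁ s₁ p₁ j₀
  have := levelWeight_pos r₀ s₀ p₀ j₀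
  gcongr
  · exact sub_nonneg.2 (by exact_mod_cast hm.le)
  · rw [← Nat.cast_sub hm.le]
    exact_mod_cast hT

theorem levelWeight_single (r s : ℝ) (p : ℝ≥0∞) (i : Fin d) (L : ℕ) :
    levelWeight r s p (Pi.single i L) = ((2 : ℝ) ^ L) ^ (r - p⁻¹.toReal + s) := by
  have hsum : ∑ i', ((Pi.single i L : Fin d → ℕ) i' : ℝ) = L := by simp [Pi.single_apply]
  have hsup : univ.sup (Pi.single i L : Fin d → ℕ) = L := by
    refine le_antisymm (Finset.sup_le fun i' _ => ?_) ?_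
    · rw [Pi.single_apply]
      split_ifs <;> omega
    · simpa using le_sup (f := (Pi.single i L : Fin d → ℕ)) (mem_univ i)
  rw [levelWeight, hsum, hsup, ← Real.rpow_natCast, ← Real.rpow_mul zero_le_two]
  ring_nf

theorem le_kolmogorovWidth_of_le_card_single (hp₀ : p₀ ≠ 0) (hq₀ : q₀ ≠ 0) (hp₁ : p₁ ≠ 0)
    (hq₁ : q₁ ≠ 0) {c₁ : ℝ} (hc₁ : 0 < c₁) (i : Fin d) (L : ℕ)
    (hcard : c₁ * 2 ^ L ≤ (#(D (Pi.single i L)) : ℝ)) (hm : 4 * (m : ℝ) ≤ c₁ * 2 ^ L) :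
    ENNReal.ofReal (min 1 ((3 / 4) ^ p₁⁻¹.toReal * c₁ ^ (p₁⁻¹.toReal - p₀⁻¹.toReal)) *
        ((2 : ℝ) ^ L) ^ (-((r₀ - r₁) - (s₁ - s₀) - max (p₀⁻¹.toReal - p₁⁻¹.toReal) 0))) ≤
      kolmogorovWidth d D r₀ s₀ p₀ q₀ r₁ s₁ p₁ q₁ m := by
  set u₀ := p₀⁻¹.toReal
  set u₁ := p₁⁻¹.toReal
  set P : ℝ := 2 ^ L
  have hP : 0 < P := by positivity
  have hn : 0 < (#(D (Pi.single i L)) : ℝ) := (mul_pos hc₁ hP).trans_le hcard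
  have hmn : m < #(D (Pi.single i L)) := by
    have : (m : ℝ) < #(D (Pi.single i L)) := by linarith [(Nat.cast_nonneg m : (0 : ℝ) ≤ m)]
    exact_mod_cast this
  set n : ℝ := (#(D (Pi.single i L)) : ℝ)
  have hratio : levelWeight r₁ s₁ p₁ (Pi.single i L) / levelWeight r₀ s₀ p₀ (Pi.single i L) =
      P ^ ((r₁ - u₁ + s₁) - (r₀ - u₀ + s₀)) := by
    rw [levelWeight_single, levelWeight_single, ← Real.rpow_sub hP]
  rcases le_or_gt u₁ u₀ with hu | hu
  · refine le_trans (ENNReal.ofReal_le_ofReal ?_)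
      (levelWeight_div_le_kolmogorovWidth D hp₀ hq₀ hp₁ hq₁ hmn)
    rw [hratio, max_eq_left (sub_nonneg.2 hu)]
    calc _ ≤ 1 * P ^ (-((r₀ - r₁) - (s₁ - s₀) - (u₀ - u₁))) := by
          gcongr
          exact min_le_left _ _
      _ = _ := by
        rw [one_mul]
        congr 1
        ring
  · refine le_trans (ENNReal.ofReal_le_ofReal ?_)
      (levelWeight_div_mul_card_sub_le_kolmogorovWidth D hp₀ hq₀ hp₁ hq₁ hmn)
    rw [hratio, max_eq_right (by linarith)]
    set e := (r₁ - u₁ + s₁) - (r₀ - u₀ + s₀)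
    have hexp : P ^ (-((r₀ - r₁) - (s₁ - s₀) - 0)) = P ^ e * P ^ (u₁ - u₀) := by
      rw [← Real.rpow_add hP]
      congr 1
      ring
    calc _ ≤ (3 / 4) ^ u₁ * c₁ ^ (u₁ - u₀) * P ^ (-((r₀ - r₁) - (s₁ - s₀) - 0)) := by
          gcongr
          exact min_le_right _ _
      _ = P ^ e * ((3 / 4) ^ u₁ * c₁ ^ (u₁ - u₀) * P ^ (u₁ - u₀)) := by
        rw [hexp]
        ring
      _ ≤ P ^ e * ((n - m) ^ u₁ / n ^ u₀) := by
        gcongr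
        exact Real.mul_rpow_le_sub_rpow_div_rpow hc₁ hP hcard (by linarith) hu.le
          ENNReal.toReal_nonneg
      _ = _ := by ring

end HybridBesov

theorem kolmogorov_width_lower_bound_general (d : ℕ) (hd : 0 < d)
    (D : (Fin d → ℕ) → Finset (Fin d → ℤ))
    (hD : ∃ c₁ c₂ : ℝ, 0 < c₁ ∧ 0 < c₂ ∧ ∀ j : Fin d → ℕ,
      c₁ * (2 : ℝ) ^ (∑ i, (j i : ℝ)) ≤ ((D j).card : ℝ) ∧
      ((D j).card : ℝ) ≤ c₂ * (2 : ℝ) ^ (∑ i, (j i : ℝ)))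
    (p₀ p₁ q₀ q₁ : ℝ≥0∞) (hp₀ : 0 < p₀) (hp₁ : 0 < p₁) (hq₀ : 0 < q₀) (hq₁ : 0 < q₁)
    (r₀ r₁ s₀ s₁ : ℝ) :
    ∃ c : ℝ, 0 < c ∧ ∃ m₀ : ℕ, ∀ m : ℕ, m₀ ≤ m →
      ENNReal.ofReal
          (c * (m : ℝ) ^
            (-((r₀ - r₁) - (s₁ - s₀) - max (p₀⁻¹.toReal - p₁⁻¹.toReal) 0))) ≤
        kolmogorovWidth d D r₀ s₀ p₀ q₀ r₁ s₁ p₁ q₁ m := by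
  obtain ⟨c₁, _, hc₁, -, hD⟩ := hD
  obtain ⟨K, hK⟩ : ∃ K : ℕ, 4 / c₁ < 2 ^ K := pow_unbounded_of_one_lt _ one_lt_two
  set α := (r₀ - r₁) - (s₁ - s₀) - max (p₀⁻¹.toReal - p₁⁻¹.toReal) 0
  set κ := min 1 ((3 / 4) ^ p₁⁻¹.toReal * c₁ ^ (p₁⁻¹.toReal - p₀⁻¹.toReal))
  refine ⟨κ * min (((2 : ℝ) ^ K) ^ (-α)) ((2 * 2 ^ K) ^ (-α)), by positivity, 1,
    fun m hm => ?_⟩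
  obtain ⟨L, hmL, hLm⟩ := Nat.exists_pow_mem_Ioc (N := m * 2 ^ K) one_lt_two (by positivity)
  have hlo : (2 : ℝ) ^ K * m ≤ 2 ^ L := by
    rw [mul_comm]
    exact_mod_cast hmL.le
  have hhi : (2 : ℝ) ^ L ≤ 2 * 2 ^ K * m := by
    rw [mul_assoc, mul_comm _ (m : ℝ)]
    exact_mod_cast hLm
  have hcard : c₁ * 2 ^ L ≤ ((D (Pi.single ⟨0, hd⟩ L)).card : ℝ) := by
    simpa [Pi.single_apply] using (hD (Pi.single ⟨0, hd⟩ L)).1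
  have h4m : 4 * (m : ℝ) ≤ c₁ * 2 ^ L := by
    rw [div_lt_iff₀ hc₁] at hK
    nlinarith
  refine le_trans (ENNReal.ofReal_le_ofReal ?_)
    (HybridBesov.le_kolmogorovWidth_of_le_card_single D hp₀.ne' hq₀.ne' hp₁.ne' hq₁.ne' hc₁
      ⟨0, hd⟩ L hcard h4m)
  rw [mul_assoc]
  gcongr
  exact Real.min_rpow_mul_rpow_le_rpow (by exact_mod_cast hm) (by positivity) hlo hhi

/-- Lower bound for the Kolmogorov dictionary widths of the break-of-scale
embedding of hybrid Besov sequence spaces: if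
`r₀ - r₁ - (1/p₀ - 1/p₁)₊ > s₁ - s₀ > 0` and `|𝔇_j| ∼ 2^{|j|₁}`, then for all
sufficiently large `m`,
`d_m(id; E) ≳ m^{-[(r₀-r₁)-(s₁-s₀)-(1/p₀-1/p₁)₊]}`. -/
theorem kolmogorov_width_lower_bound (d : ℕ) (hd : 0 < d)
    (D : (Fin d → ℕ) → Finset (Fin d → ℤ))
    (hD : ∃ c₁ c₂ : ℝ, 0 < c₁ ∧ 0 < c₂ ∧ ∀ j : Fin d → ℕ,
      c₁ * (2 : ℝ) ^ (∑ i, (j i : ℝ)) ≤ ((D j).card : ℝ) ∧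
      ((D j).card : ℝ) ≤ c₂ * (2 : ℝ) ^ (∑ i, (j i : ℝ)))
    (p₀ p₁ q₀ q₁ : ℝ≥0∞) (hp₀ : 0 < p₀) (hp₁ : 0 < p₁) (hq₀ : 0 < q₀) (hq₁ : 0 < q₁)
    (r₀ r₁ s₀ s₁ : ℝ)
    (hcond : s₁ - s₀ < r₀ - r₁ - max (p₀⁻¹.toReal - p₁⁻¹.toReal) 0)
    (hs : 0 < s₁ - s₀) :
    ∃ c : ℝ, 0 < c ∧ ∃ m₀ : ℕ, ∀ m : ℕ, m₀ ≤ m →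
      ENNReal.ofReal
          (c * (m : ℝ) ^
            (-((r₀ - r₁) - (s₁ - s₀) - max (p₀⁻¹.toReal - p₁⁻¹.toReal) 0))) ≤
        kolmogorovWidth d D r₀ s₀ p₀ q₀ r₁ s₁ p₁ q₁ m :=
  kolmogorov_width_lower_bound_general d hd D hD p₀ p₁ q₀ q₁ hp₀ hp₁ hq₀ hq₁ r₀ r₁ s₀ s₁
end
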